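/- arXiv:2306.05697 — 4 statements merged into one kernel-verified Lean document; each statement's English description precedes it below -/
import Mathlib

section
/- (Lemma C.2) Let ν ∈ ℝ, let R : ℝ² → ℝ² be a linear isometry equivalence (orthogonal transformation), and let u : ℝ² × ℝ → ℝ², w : ℝ² × ℝ → ℝ, f : ℝ² → ℝ. Assume that for every t the map x ↦ w(x,t) is twice continuously differentiable, for every t the map x ↦ u(x,t) is differentiable, for every x the map t ↦ w(x,t) is differentiable, and that at every (x,t): ∂ₜw(x,t) + ⟨u(x,t), ∇ₓw(x,t)⟩ = ν·Δₓw(x,t) + f(x) and ∇ₓ·u(x,t) = 0. Define u_R(x,t) := R⁻¹(u(Rx,t)), w_R(x,t) := w(Rx,t), f_R(x) := f(Rx). Then at every (x,t): ∂ₜw_R(x,t) + ⟨u_R(x,t), ∇ₓw_R(x,t)⟩ = ν·Δₓw_R(x,t) + f_R(x) and ∇ₓ·u_R(x,t) = 0. -/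
open MeasureTheory
open scoped RealInnerProductSpace

/-- The Laplacian of `w : ℝ² → ℝ` at `x`: the trace of the second Fréchet
derivative of `w` at `x`, computed on the standard orthonormal basis. -/
noncomputable def laplacian2 (w : EuclideanSpace ℝ (Fin 2) → ℝ)
    (x : EuclideanSpace ℝ (Fin 2)) : ℝ :=
  ∑ i : Fin 2,
    fderiv ℝ (fderiv ℝ w) x (EuclideanSpace.single i (1 : ℝ))
      (EuclideanSpace.single i (1 : ℝ))

/-- The divergence of the vector field `v : ℝ² → ℝ²` at `x`: the trace of the
Fréchet derivative of `v` at `x`. -/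
noncomputable def divergence2
    (v : EuclideanSpace ℝ (Fin 2) → EuclideanSpace ℝ (Fin 2))
    (x : EuclideanSpace ℝ (Fin 2)) : ℝ :=
  LinearMap.trace ℝ (EuclideanSpace ℝ (Fin 2)) (fderiv ℝ v x).toLinearMap

section Aux

local notation "E2" => EuclideanSpace ℝ (Fin 2)

lemma fderiv_comp_R_aux {F : Type*} [NormedAddCommGroup F] [NormedSpace ℝ F]
    (R : E2 ≃ₗᵢ[ℝ] E2) (g : E2 → F) (x : E2) (hg : DifferentiableAt ℝ g (R x)) :
    fderiv ℝ (fun y => g (R y)) x = (fderiv ℝ g (R x)).comp (R : E2 →L[ℝ] E2) := by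
  have h := fderiv_comp x hg R.differentiableAt
  rw [R.fderiv] at h
  simpa [Function.comp_def] using h

lemma gradient_comp_R_aux (R : E2 ≃ₗᵢ[ℝ] E2) (g : E2 → ℝ) (x : E2)
    (hg : DifferentiableAt ℝ g (R x)) :
    gradient (fun y => g (R y)) x = R.symm (gradient g (R x)) := by
  apply ext_inner_right ℝ
  intro a
  have h1 : ⟪gradient (fun y => g (R y)) x, a⟫ = fderiv ℝ (fun y => g (R y)) x a := by
    rw [gradient, InnerProductSpace.toDual_symm_apply]
  have h2 : ⟪gradient g (R x), R a⟫ = fderiv ℝ g (R x) (R a) := by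
    rw [gradient, InnerProductSpace.toDual_symm_apply]
  rw [h1, fderiv_comp_R_aux R g x hg]
  have h3 : ⟪R.symm (gradient g (R x)), a⟫ = ⟪gradient g (R x), R a⟫ := by
    rw [← R.inner_map_map, R.apply_symm_apply]
  rw [h3, h2]
  simp

lemma sum_bilin_onb_aux (B : E2 →L[ℝ] E2 →L[ℝ] ℝ)
    (b b' : OrthonormalBasis (Fin 2) ℝ E2) :
    ∑ i, B (b' i) (b' i) = ∑ i, B (b i) (b i) := by
  have expand : ∀ z : E2, z = ∑ j, ⟪b j, z⟫ • b j := by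
    intro z
    conv_lhs => rw [← b.sum_repr z]
    exact Finset.sum_congr rfl fun j _ => by rw [b.repr_apply_apply]
  have key : ∀ i, B (b' i) (b' i) = ∑ j, ∑ k, ⟪b j, b' i⟫ * ⟪b k, b' i⟫ * B (b j) (b k) := by
    intro i
    conv_lhs => rw [expand (b' i)]
    rw [map_sum]
    simp only [ContinuousLinearMap.coe_sum', Finset.sum_apply, _root_.map_smul,
      ContinuousLinearMap.smul_apply, ContinuousLinearMap.coe_smul', Pi.smul_apply,
      map_sum, Finset.smul_sum, smul_eq_mul, Finset.mul_sum]
    rw [Finset.sum_comm]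
    refine Finset.sum_congr rfl fun j _ => Finset.sum_congr rfl fun k _ => by
      ring
  calc ∑ i, B (b' i) (b' i)
      = ∑ i, ∑ j, ∑ k, ⟪b j, b' i⟫ * ⟪b k, b' i⟫ * B (b j) (b k) :=
        Finset.sum_congr rfl fun i _ => key i
    _ = ∑ j, ∑ k, (∑ i, ⟪b j, b' i⟫ * ⟪b' i, b k⟫) * B (b j) (b k) := by
        rw [Finset.sum_comm]
        refine Finset.sum_congr rfl fun j _ => ?_
        rw [Finset.sum_comm]
        refine Finset.sum_congr rfl fun k _ => ?_
        rw [Finset.sum_mul]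
        refine Finset.sum_congr rfl fun i _ => ?_
        rw [real_inner_comm (b' i) (b k)]
    _ = ∑ j, ∑ k, ⟪b j, b k⟫ * B (b j) (b k) := by
        refine Finset.sum_congr rfl fun j _ => Finset.sum_congr rfl fun k _ => ?_
        rw [b'.sum_inner_mul_inner]
    _ = ∑ j, B (b j) (b j) := by
        refine Finset.sum_congr rfl fun j _ => ?_
        rw [Finset.sum_eq_single j]
        · rw [real_inner_self_eq_norm_sq, b.orthonormal.1 j]; norm_num
        · intro k _ hk
          rw [b.orthonormal.2 (Ne.symm hk)]; ring
        · intro h; exact absurd (Finset.mem_univ j) h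

lemma hessian_comp_R_aux (R : E2 ≃ₗᵢ[ℝ] E2) (g : E2 → ℝ) (hg : ContDiff ℝ 2 g) (x b a : E2) :
    fderiv ℝ (fderiv ℝ (fun y => g (R y))) x b a
      = fderiv ℝ (fderiv ℝ g) (R x) (R b) (R a) := by
  set Rc : E2 →L[ℝ] E2 := (R : E2 →L[ℝ] E2) with hRc
  set Φ : (E2 →L[ℝ] ℝ) →L[ℝ] (E2 →L[ℝ] ℝ) :=
    (ContinuousLinearMap.compL ℝ E2 E2 ℝ).flip Rc with hΦ
  have hgd : Differentiable ℝ g := hg.differentiable (by norm_num)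
  have hD2 : Differentiable ℝ (fderiv ℝ g) :=
    (hg.fderiv_right (by norm_num : (1:WithTop ℕ∞) + 1 ≤ 2)).differentiable one_ne_zero
  have h1 : fderiv ℝ (fun y => g (R y)) = fun y => Φ (fderiv ℝ g (R y)) := by
    funext y
    rw [fderiv_comp_R_aux R g y (hgd _)]
    rfl
  have hc : fderiv ℝ (fun y => fderiv ℝ g (R y)) x
      = (fderiv ℝ (fderiv ℝ g) (R x)).comp Rc := fderiv_comp_R_aux R (fderiv ℝ g) x (hD2 _)
  have hin : DifferentiableAt ℝ (fun y => fderiv ℝ g (R y)) x := by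
    have := DifferentiableAt.comp x (hD2 (R x)) R.differentiableAt
    simpa [Function.comp_def] using this
  have h2 : fderiv ℝ (fun y => Φ (fderiv ℝ g (R y))) x
      = Φ.comp ((fderiv ℝ (fderiv ℝ g) (R x)).comp Rc) := by
    have h := fderiv_comp x Φ.differentiableAt hin
    rw [ContinuousLinearMap.fderiv, hc] at h
    simpa [Function.comp_def] using h
  rw [h1, h2]
  rfl

lemma laplacian_comp_R_aux (R : E2 ≃ₗᵢ[ℝ] E2) (g : E2 → ℝ) (hg : ContDiff ℝ 2 g) (x : E2) :
    laplacian2 (fun y => g (R y)) x = laplacian2 g (R x) := by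
  unfold laplacian2
  have b := EuclideanSpace.basisFun (Fin 2) ℝ
  calc ∑ i : Fin 2, fderiv ℝ (fderiv ℝ (fun y => g (R y))) x (EuclideanSpace.single i 1)
        (EuclideanSpace.single i 1)
      = ∑ i : Fin 2, fderiv ℝ (fderiv ℝ g) (R x) (R (EuclideanSpace.single i 1))
          (R (EuclideanSpace.single i 1)) :=
        Finset.sum_congr rfl fun i _ => hessian_comp_R_aux R g hg x _ _
    _ = ∑ i : Fin 2, fderiv ℝ (fderiv ℝ g) (R x) (EuclideanSpace.single i 1)
          (EuclideanSpace.single i 1) := by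
        have := sum_bilin_onb_aux (fderiv ℝ (fderiv ℝ g) (R x))
          (EuclideanSpace.basisFun (Fin 2) ℝ)
          ((EuclideanSpace.basisFun (Fin 2) ℝ).map R)
        simpa [OrthonormalBasis.map_apply, EuclideanSpace.basisFun_apply] using this

lemma div_comp_R_aux (R : E2 ≃ₗᵢ[ℝ] E2) (v : E2 → E2) (hv : Differentiable ℝ v) (x : E2) :
    divergence2 (fun y => R.symm (v (R y))) x = divergence2 v (R x) := by
  have hin : DifferentiableAt ℝ (fun y => v (R y)) x := by
    have := DifferentiableAt.comp x (hv (R x)) R.differentiableAt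
    simpa [Function.comp_def] using this
  have h1 : fderiv ℝ (fun y => R.symm (v (R y))) x
      = (R.symm : E2 →L[ℝ] E2).comp ((fderiv ℝ v (R x)).comp (R : E2 →L[ℝ] E2)) := by
    have h := fderiv_comp x R.symm.differentiableAt hin
    rw [R.symm.fderiv, fderiv_comp_R_aux R v x (hv _)] at h
    simpa [Function.comp_def] using h
  unfold divergence2
  rw [h1]
  have h2 : ((R.symm : E2 →L[ℝ] E2).comp
        ((fderiv ℝ v (R x)).comp (R : E2 →L[ℝ] E2))).toLinearMap
      = (R.symm.toLinearEquiv).conj (fderiv ℝ v (R x)).toLinearMap := by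
    ext y
    simp [LinearEquiv.conj_apply]
  rw [h2, LinearMap.trace_conj']

end Aux

/-- Lemma C.2: if `(u, w)` solves the vorticity form of the 2D Navier-Stokes
equations with forcing `f`, then the rotated/reflected fields
`u_R (x,t) = R⁻¹ u (R x, t)`, `w_R (x,t) = w (R x, t)` solve the equations with
forcing `f_R (x) = f (R x)`. -/
theorem navierStokes_vorticity_orthogonal_transform
    (ν : ℝ)
    (R : EuclideanSpace ℝ (Fin 2) ≃ₗᵢ[ℝ] EuclideanSpace ℝ (Fin 2))
    (u : EuclideanSpace ℝ (Fin 2) × ℝ → EuclideanSpace ℝ (Fin 2))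
    (w : EuclideanSpace ℝ (Fin 2) × ℝ → ℝ)
    (f : EuclideanSpace ℝ (Fin 2) → ℝ)
    (hw : ∀ t : ℝ, ContDiff ℝ 2 (fun x => w (x, t)))
    (hu : ∀ t : ℝ, Differentiable ℝ (fun x => u (x, t)))
    (hwt : ∀ x : EuclideanSpace ℝ (Fin 2), Differentiable ℝ (fun t => w (x, t)))
    (heq : ∀ (x : EuclideanSpace ℝ (Fin 2)) (t : ℝ),
      deriv (fun s => w (x, s)) t + ⟪u (x, t), gradient (fun y => w (y, t)) x⟫ =
        ν * laplacian2 (fun y => w (y, t)) x + f x)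
    (hdiv : ∀ (x : EuclideanSpace ℝ (Fin 2)) (t : ℝ),
      divergence2 (fun y => u (y, t)) x = 0) :
    (∀ (x : EuclideanSpace ℝ (Fin 2)) (t : ℝ),
      deriv (fun s => w (R x, s)) t +
          ⟪R.symm (u (R x, t)), gradient (fun y => w (R y, t)) x⟫ =
        ν * laplacian2 (fun y => w (R y, t)) x + f (R x)) ∧
    (∀ (x : EuclideanSpace ℝ (Fin 2)) (t : ℝ),
      divergence2 (fun y => R.symm (u (R y, t))) x = 0) := by
  constructor
  · intro x t
    have hgrad : gradient (fun y => w (R y, t)) x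
        = R.symm (gradient (fun y => w (y, t)) (R x)) :=
      gradient_comp_R_aux R (fun y => w (y, t)) x
        ((hw t).differentiable (by norm_num) _)
    have hinner : ⟪R.symm (u (R x, t)), gradient (fun y => w (R y, t)) x⟫
        = ⟪u (R x, t), gradient (fun y => w (y, t)) (R x)⟫ := by
      rw [hgrad, R.symm.inner_map_map]
    have hlap : laplacian2 (fun y => w (R y, t)) x
        = laplacian2 (fun y => w (y, t)) (R x) :=
      laplacian_comp_R_aux R (fun y => w (y, t)) (hw t) x
    rw [hinner, hlap]
    exact heq (R x) t
  · intro x t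
    rw [div_comp_R_aux R (fun y => u (y, t)) (hu t) x]
    exact hdiv (R x) t
end

section
/- Let ν ∈ ℝ, let R : ℝ² → ℝ² be a linear isometry equivalence (orthogonal transformation), and let u : ℝ² × ℝ → ℝ², w : ℝ² × ℝ → ℝ, f : ℝ² → ℝ with f rotation-invariant in the sense that f(Rx) = f(x) for all x. Assume that for every t the map x ↦ w(x,t) is twice continuously differentiable, for every t the map x ↦ u(x,t) is differentiable, for every x the map t ↦ w(x,t) is differentiable, and that at every (x,t): ∂ₜw(x,t) + ⟨u(x,t), ∇ₓw(x,t)⟩ = ν·Δₓw(x,t) + f(x) and ∇ₓ·u(x,t) = 0. Then the transformed pair u_R(x,t) := R⁻¹(u(Rx,t)), w_R(x,t) := w(Rx,t) satisfies at every (x,t): ∂ₜw_R(x,t) + ⟨u_R(x,t), ∇ₓw_R(x,t)⟩ = ν·Δₓw_R(x,t) + f(x) and ∇ₓ·u_R(x,t) = 0; that is, the solution set of the vorticity Navier–Stokes equation with invariant forcing is closed under the transformation R. -/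
open MeasureTheory
open scoped RealInnerProductSpace

/-! Each operator in the equations is natural under the orthogonal change of variables `x ↦ R x`.
The gradient transforms as `∇(g ∘ R) = R⁻¹ ∘ (∇g ∘ R)`; the Laplacian, being the trace of the
Hessian on any orthonormal basis, is invariant because `R` carries orthonormal bases to orthonormal
bases; and the derivative of `R⁻¹ ∘ v ∘ R` is a conjugate of `Dv`, so it has the same trace. Since
`R⁻¹` preserves inner products and `f ∘ R = f`, the transformed equations at `x` are the original
ones at `R x`. -/

open Laplacian InnerProductSpace

namespace LinearIsometryEquiv

variable {E F : Type*} [NormedAddCommGroup E] [InnerProductSpace ℝ E]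
  [NormedAddCommGroup F] [InnerProductSpace ℝ F]

theorem gradient_comp_right [CompleteSpace E] [CompleteSpace F] (R : E ≃ₗᵢ[ℝ] F) (g : F → ℝ)
    (x : E) : gradient (fun y => g (R y)) x = R.symm (gradient g (R x)) := by
  have hD : fderiv ℝ (fun y => g (R y)) x = (fderiv ℝ g (R x)).comp (R : E →L[ℝ] F) :=
    R.toContinuousLinearEquiv.comp_right_fderiv
  rw [gradient, gradient, hD]
  apply (toDual ℝ E).injective
  ext v
  rw [apply_symm_apply, toDual_apply_apply, ← R.inner_map_map, R.apply_symm_apply,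
    toDual_symm_apply]
  rfl

theorem laplacian_comp_right [FiniteDimensional ℝ E] [FiniteDimensional ℝ F] (R : E ≃ₗᵢ[ℝ] F)
    (g : F → ℝ) (x : E) : Δ (fun y => g (R y)) x = Δ g (R x) := by
  let b := stdOrthonormalBasis ℝ E
  have hD2 : iteratedFDeriv ℝ 2 (fun y => g (R y)) x =
      (iteratedFDeriv ℝ 2 g (R x)).compContinuousLinearMap fun _ => (R : E →L[ℝ] F) := by
    have h := R.toContinuousLinearEquiv.iteratedFDerivWithin_comp_right g uniqueDiffOn_univ
      (Set.mem_univ (R x)) 2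
    simp only [Set.preimage_univ, iteratedFDerivWithin_univ] at h
    exact h
  rw [laplacian_eq_iteratedFDeriv_orthonormalBasis _ b,
    laplacian_eq_iteratedFDeriv_orthonormalBasis _ (b.map R)]
  refine Finset.sum_congr rfl fun i _ => ?_
  rw [hD2, ContinuousMultilinearMap.compContinuousLinearMap_apply, OrthonormalBasis.map_apply]
  congr 1
  ext j
  fin_cases j <;> rfl

end LinearIsometryEquiv

theorem ContinuousLinearEquiv.trace_fderiv_conj {𝕜 E F : Type*} [NontriviallyNormedField 𝕜]
    [NormedAddCommGroup E] [NormedSpace 𝕜 E] [NormedAddCommGroup F] [NormedSpace 𝕜 F]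
    (R : E ≃L[𝕜] F) (v : F → F) (x : E) :
    LinearMap.trace 𝕜 E (fderiv 𝕜 (fun y => R.symm (v (R y))) x) =
      LinearMap.trace 𝕜 F (fderiv 𝕜 v (R x)) := by
  rw [show (fun y => R.symm (v (R y))) = R.symm ∘ v ∘ R from rfl, R.symm.comp_fderiv,
    R.comp_right_fderiv]
  exact LinearMap.trace_conj' _ (R.symm : F ≃L[𝕜] E).toLinearEquiv

theorem laplacian2_eq_laplacian (g : EuclideanSpace ℝ (Fin 2) → ℝ) (x : EuclideanSpace ℝ (Fin 2)) :
    laplacian2 g x = Δ g x := by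
  rw [laplacian_eq_iteratedFDeriv_orthonormalBasis _ (EuclideanSpace.basisFun (Fin 2) ℝ)]
  simp [laplacian2, iteratedFDeriv_two_apply]

theorem navierStokes_vorticity_closed_under_symmetry_general
    (ν : ℝ)
    (R : EuclideanSpace ℝ (Fin 2) ≃ₗᵢ[ℝ] EuclideanSpace ℝ (Fin 2))
    (u : EuclideanSpace ℝ (Fin 2) × ℝ → EuclideanSpace ℝ (Fin 2))
    (w : EuclideanSpace ℝ (Fin 2) × ℝ → ℝ)
    (f : EuclideanSpace ℝ (Fin 2) → ℝ)
    (hfR : ∀ x : EuclideanSpace ℝ (Fin 2), f (R x) = f x)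
    (heq : ∀ (x : EuclideanSpace ℝ (Fin 2)) (t : ℝ),
      deriv (fun s => w (x, s)) t + ⟪u (x, t), gradient (fun y => w (y, t)) x⟫ =
        ν * laplacian2 (fun y => w (y, t)) x + f x)
    (hdiv : ∀ (x : EuclideanSpace ℝ (Fin 2)) (t : ℝ),
      divergence2 (fun y => u (y, t)) x = 0) :
    (∀ (x : EuclideanSpace ℝ (Fin 2)) (t : ℝ),
      deriv (fun s => w (R x, s)) t +
          ⟪R.symm (u (R x, t)), gradient (fun y => w (R y, t)) x⟫ =
        ν * laplacian2 (fun y => w (R y, t)) x + f x) ∧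
    (∀ (x : EuclideanSpace ℝ (Fin 2)) (t : ℝ),
      divergence2 (fun y => R.symm (u (R y, t))) x = 0) := by
  refine ⟨fun x t => ?_, fun x t => ?_⟩
  · rw [R.gradient_comp_right (fun y => w (y, t)), R.symm.inner_map_map,
      laplacian2_eq_laplacian, R.laplacian_comp_right (fun y => w (y, t)),
      ← laplacian2_eq_laplacian, ← hfR x]
    exact heq (R x) t
  · exact (R.toContinuousLinearEquiv.trace_fderiv_conj _ x).trans (hdiv (R x) t)

/-- If the forcing `f` is invariant under the orthogonal transformation `R`,
then the solution set of the vorticity Navier-Stokes equations is closed under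
`R`: `u_R (x,t) = R⁻¹ u (R x, t)`, `w_R (x,t) = w (R x, t)` solve the same
equations with the same forcing `f`. -/
theorem navierStokes_vorticity_closed_under_symmetry
    (ν : ℝ)
    (R : EuclideanSpace ℝ (Fin 2) ≃ₗᵢ[ℝ] EuclideanSpace ℝ (Fin 2))
    (u : EuclideanSpace ℝ (Fin 2) × ℝ → EuclideanSpace ℝ (Fin 2))
    (w : EuclideanSpace ℝ (Fin 2) × ℝ → ℝ)
    (f : EuclideanSpace ℝ (Fin 2) → ℝ)
    (hfR : ∀ x : EuclideanSpace ℝ (Fin 2), f (R x) = f x)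
    (hw : ∀ t : ℝ, ContDiff ℝ 2 (fun x => w (x, t)))
    (hu : ∀ t : ℝ, Differentiable ℝ (fun x => u (x, t)))
    (hwt : ∀ x : EuclideanSpace ℝ (Fin 2), Differentiable ℝ (fun t => w (x, t)))
    (heq : ∀ (x : EuclideanSpace ℝ (Fin 2)) (t : ℝ),
      deriv (fun s => w (x, s)) t + ⟪u (x, t), gradient (fun y => w (y, t)) x⟫ =
        ν * laplacian2 (fun y => w (y, t)) x + f x)
    (hdiv : ∀ (x : EuclideanSpace ℝ (Fin 2)) (t : ℝ),
      divergence2 (fun y => u (y, t)) x = 0) :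
    (∀ (x : EuclideanSpace ℝ (Fin 2)) (t : ℝ),
      deriv (fun s => w (R x, s)) t +
          ⟪R.symm (u (R x, t)), gradient (fun y => w (R y, t)) x⟫ =
        ν * laplacian2 (fun y => w (R y, t)) x + f x) ∧
    (∀ (x : EuclideanSpace ℝ (Fin 2)) (t : ℝ),
      divergence2 (fun y => R.symm (u (R y, t))) x = 0) :=
  navierStokes_vorticity_closed_under_symmetry_general ν R u w f hfR heq hdiv
end

section
/- (Frequency-domain computation of the p4 group convolution, eq. (5)) Let N ≥ 1 and let f, ψ : ZMod 4 × (ZMod N)² → ℂ. Write f_s := f(s, ·) and ψ_s := ψ(s, ·), and let ρ(a,b) = (−b,a) denote the 90° rotation of (ZMod N)². Then for every s_g ∈ ZMod 4 and x_g ∈ (ZMod N)², the p4 group convolution satisfies (f ⋆ ψ)(s_g, x_g) = ∑_{s ∈ ZMod 4} 𝓕⁻¹( (𝓕 f_s) · (ξ ↦ (𝓕 ψ_{s − s_g})(−ρ^{−s_g} ξ)) )(x_g), where the product inside 𝓕⁻¹ is pointwise multiplication of functions on (ZMod N)². In other words, the group convolution over the roto-translation group p4 reduces to, for each stabilizer element,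 an inverse DFT of the product of the DFT of the input slice with a transformed copy of the DFT of the kernel slice. -/
/-- The 90° rotation `ρ (a, b) = (−b, a)` of the grid `(ZMod N)²`. -/
def rot2 {N : ℕ} (x : ZMod N × ZMod N) : ZMod N × ZMod N := (-x.2, x.1)

/-- The `s`-fold iterate `ρˢ` of the 90° rotation, for `s : ZMod 4`
(well-defined since `ρ⁴ = id`). -/
def rotPow {N : ℕ} (s : ZMod 4) (x : ZMod N × ZMod N) : ZMod N × ZMod N :=
  rot2^[s.val] x

/-- Multiplication in the group `p4 = ZMod 4 × (ZMod N)²`: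
`(s, x) · (t, y) = (s + t, x + ρˢ y)`. -/
def p4Mul {N : ℕ} (g h : ZMod 4 × (ZMod N × ZMod N)) :
    ZMod 4 × (ZMod N × ZMod N) :=
  (g.1 + h.1, g.2 + rotPow g.1 h.2)

/-- Inversion in the group `p4`: `(s, x)⁻¹ = (−s, −ρ⁻ˢ x)`. -/
def p4Inv {N : ℕ} (g : ZMod 4 × (ZMod N × ZMod N)) :
    ZMod 4 × (ZMod N × ZMod N) :=
  (-g.1, -rotPow (-g.1) g.2)

/-- The left action of `p4` on functions: `(L_u f) (h) = f (u⁻¹ · h)`. -/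
def p4L {N : ℕ} (u : ZMod 4 × (ZMod N × ZMod N))
    (f : ZMod 4 × (ZMod N × ZMod N) → ℂ) :
    ZMod 4 × (ZMod N × ZMod N) → ℂ :=
  fun h => f (p4Mul (p4Inv u) h)

/-- The `p4` group convolution: `(f ⋆ ψ) (g) = ∑_h f (h) · ψ (g⁻¹ · h)`. -/
noncomputable def p4Conv {N : ℕ} [NeZero N]
    (f ψ : ZMod 4 × (ZMod N × ZMod N) → ℂ)
    (g : ZMod 4 × (ZMod N × ZMod N)) : ℂ :=
  ∑ h : ZMod 4 × (ZMod N × ZMod N), f h * ψ (p4Mul (p4Inv g) h)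


/-- The 2D discrete Fourier transform on the grid `(ZMod N)²`:
`(𝓕 f) ξ = ∑ₓ f x · exp (−2πi (ξ₁x₁ + ξ₂x₂) / N)`, where the products `ξᵢ xᵢ`
are computed in `ZMod N` and lifted. -/
noncomputable def dft2 (N : ℕ) [NeZero N] (f : ZMod N × ZMod N → ℂ)
    (ξ : ZMod N × ZMod N) : ℂ :=
  ∑ x : ZMod N × ZMod N,
    f x * Complex.exp (-(2 * Real.pi * Complex.I) *
      (((ξ.1 * x.1).val : ℂ) + ((ξ.2 * x.2).val : ℂ)) / (N : ℂ))

/-- The 2D inverse discrete Fourier transform on the grid `(ZMod N)²`: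
`(𝓕⁻¹ F) x = N⁻² ∑_ξ F ξ · exp (2πi (ξ₁x₁ + ξ₂x₂) / N)`. -/
noncomputable def idft2 (N : ℕ) [NeZero N] (F : ZMod N × ZMod N → ℂ)
    (x : ZMod N × ZMod N) : ℂ :=
  ((N : ℂ) ^ 2)⁻¹ *
    ∑ ξ : ZMod N × ZMod N,
      F ξ * Complex.exp ((2 * Real.pi * Complex.I) *
        (((ξ.1 * x.1).val : ℂ) + ((ξ.2 * x.2).val : ℂ)) / (N : ℂ))

namespace P4Aux

set_option linter.unusedSectionVars false

variable {N : ℕ} [NeZero N]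

noncomputable def E (a : ZMod N) : ℂ := ZMod.stdAddChar a

lemma E_apply (a : ZMod N) :
    E a = Complex.exp (2 * Real.pi * Complex.I * a.val / N) := by
  rw [E, ZMod.stdAddChar_apply, ZMod.toCircle_apply]

lemma E_add (a b : ZMod N) : E (a + b) = E a * E b := by
  simp [E, AddChar.map_add_eq_mul]

lemma E_zero : E (0 : ZMod N) = 1 := by simp [E]

lemma E_neg (a : ZMod N) :
    E (-a) = Complex.exp (-(2 * Real.pi * Complex.I) * a.val / N) := by
  have h : E (-a) * E a = 1 := by rw [← E_add, neg_add_cancel, E_zero]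
  rw [eq_inv_of_mul_eq_one_left h, E_apply, ← Complex.exp_neg]
  ring_nf

noncomputable def P (ξ x : ZMod N × ZMod N) : ℂ := E (ξ.1 * x.1) * E (ξ.2 * x.2)

lemma P_neg_left (ξ x : ZMod N × ZMod N) : P (-ξ) x = P ξ (-x) := by
  simp [P]

lemma P_add_right (ξ x y : ZMod N × ZMod N) : P ξ (x + y) = P ξ x * P ξ y := by
  simp only [P, Prod.fst_add, Prod.snd_add, mul_add, E_add]; ring

lemma P_rot (ξ x : ZMod N × ZMod N) : P (rot2 ξ) (rot2 x) = P ξ x := by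
  simp only [P, rot2, neg_mul_neg]; ring

lemma P_rotPow (s : ZMod 4) (ξ x : ZMod N × ZMod N) :
    P (rotPow s ξ) (rotPow s x) = P ξ x := by
  rw [rotPow, rotPow]
  induction s.val with
  | zero => simp
  | succ k ih => rw [Function.iterate_succ_apply', Function.iterate_succ_apply', P_rot, ih]

lemma rot2_four (x : ZMod N × ZMod N) : rot2^[4] x = x := by
  show rot2 (rot2 (rot2 (rot2 x))) = x
  simp [rot2]

lemma rot2_mod (k : ℕ) (x : ZMod N × ZMod N) : rot2^[k] x = rot2^[k % 4] x := by
  conv_lhs => rw [← Nat.div_add_mod k 4]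
  rw [Function.iterate_add_apply, Function.iterate_mul]
  exact Function.iterate_fixed (rot2_four _) _

lemma rotPow_add (s t : ZMod 4) (x : ZMod N × ZMod N) :
    rotPow s (rotPow t x) = rotPow (s + t) x := by
  rw [rotPow, rotPow, rotPow, ← Function.iterate_add_apply, rot2_mod, ZMod.val_add]

lemma rotPow_zero (x : ZMod N × ZMod N) : rotPow 0 x = x := by
  simp [rotPow, ZMod.val_zero]

lemma rotPow_cancel (s : ZMod 4) (x : ZMod N × ZMod N) :
    rotPow s (rotPow (-s) x) = x := by
  rw [rotPow_add, add_neg_cancel, rotPow_zero]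

lemma rot2_sub (x y : ZMod N × ZMod N) : rot2 (x - y) = rot2 x - rot2 y := by
  simp only [rot2, Prod.ext_iff, Prod.fst_sub, Prod.snd_sub]
  exact ⟨by ring, trivial⟩

lemma rotPow_sub (s : ZMod 4) (x y : ZMod N × ZMod N) :
    rotPow s (x - y) = rotPow s x - rotPow s y := by
  rw [rotPow, rotPow, rotPow]
  induction s.val with
  | zero => simp
  | succ k ih => rw [Function.iterate_succ_apply', Function.iterate_succ_apply',
      Function.iterate_succ_apply', ih, rot2_sub]

lemma sum_E (v : ZMod N) :
    ∑ c : ZMod N, E (c * v) = if v = 0 then (N : ℂ) else 0 := by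
  split_ifs with h
  · simp [h, E_zero, Finset.card_univ]
  · simp_rw [mul_comm _ v]
    have := AddChar.sum_eq_zero_of_ne_one (ZMod.isPrimitive_stdAddChar N h)
    simp only [AddChar.mulShift_apply] at this
    simpa [E] using this

lemma sum_P (v : ZMod N × ZMod N) :
    ∑ ξ : ZMod N × ZMod N, P ξ v = if v = 0 then ((N : ℂ))^2 else 0 := by
  rw [Fintype.sum_prod_type]
  simp_rw [P]
  rw [← Finset.sum_mul_sum]
  rw [sum_E, sum_E]
  have hv : (v = 0) ↔ (v.1 = 0 ∧ v.2 = 0) := Prod.ext_iff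
  by_cases h1 : v.1 = 0 <;> by_cases h2 : v.2 = 0 <;> simp [hv, h1, h2] <;> ring

lemma dft2_eq (h : ZMod N × ZMod N → ℂ) (ξ : ZMod N × ZMod N) :
    dft2 N h ξ = ∑ x : ZMod N × ZMod N, h x * P (-ξ) x := by
  unfold dft2
  refine Finset.sum_congr rfl fun x _ => ?_
  congr 1
  simp only [P, Prod.fst_neg, Prod.snd_neg, neg_mul]
  rw [E_neg, E_neg, ← Complex.exp_add]
  congr 1
  ring

lemma idft2_eq (F : ZMod N × ZMod N → ℂ) (x : ZMod N × ZMod N) :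
    idft2 N F x = ((N : ℂ)^2)⁻¹ * ∑ ξ : ZMod N × ZMod N, F ξ * P ξ x := by
  unfold idft2
  congr 1
  refine Finset.sum_congr rfl fun ξ _ => ?_
  congr 1
  simp only [P]
  rw [E_apply, E_apply, ← Complex.exp_add]
  congr 1
  ring

lemma key (f ψ : ZMod 4 × (ZMod N × ZMod N) → ℂ)
    (sg s : ZMod 4) (xg : ZMod N × ZMod N) :
    idft2 N (fun ξ => dft2 N (fun x => f (s, x)) ξ *
        dft2 N (fun x => ψ (s - sg, x)) (-(rotPow (-sg) ξ))) xg
    = ∑ x : ZMod N × ZMod N, f (s, x) * ψ (s - sg, rotPow (-sg) (x - xg)) := by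
  have hNne : (N : ℂ) ≠ 0 := Nat.cast_ne_zero.2 (NeZero.ne N)
  have hP : ∀ (ξ y : ZMod N × ZMod N), P (rotPow (-sg) ξ) y = P ξ (rotPow sg y) := by
    intro ξ y
    conv_lhs => rw [show y = rotPow (-sg) (rotPow sg y) by
      rw [rotPow_add, neg_add_cancel, rotPow_zero]]
    rw [P_rotPow]
  have hcond : ∀ x y : ZMod N × ZMod N,
      (-x + rotPow sg y + xg = 0) ↔ y = rotPow (-sg) (x - xg) := by
    intro x y
    constructor
    · intro h
      have h2 : rotPow sg y = x - xg := by linear_combination h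
      rw [← h2, rotPow_add, neg_add_cancel, rotPow_zero]
    · intro h
      subst h
      rw [rotPow_cancel]
      ring
  rw [idft2_eq]
  simp_rw [dft2_eq, neg_neg, hP]
  calc ((N : ℂ)^2)⁻¹ * ∑ ξ : ZMod N × ZMod N,
        (∑ x : ZMod N × ZMod N, f (s, x) * P (-ξ) x) *
          (∑ y : ZMod N × ZMod N, ψ (s - sg, y) * P ξ (rotPow sg y)) * P ξ xg
      = ((N : ℂ)^2)⁻¹ * ∑ ξ : ZMod N × ZMod N, ∑ x : ZMod N × ZMod N,
          ∑ y : ZMod N × ZMod N,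
          (f (s, x) * ψ (s - sg, y)) * P ξ (-x + rotPow sg y + xg) := by
        refine congrArg _ (Finset.sum_congr rfl fun ξ _ => ?_)
        rw [Finset.sum_mul_sum, Finset.sum_mul]
        refine Finset.sum_congr rfl fun x _ => ?_
        rw [Finset.sum_mul]
        refine Finset.sum_congr rfl fun y _ => ?_
        rw [P_neg_left, P_add_right, P_add_right]
        ring
    _ = ((N : ℂ)^2)⁻¹ * ∑ x : ZMod N × ZMod N, ∑ y : ZMod N × ZMod N,
          (f (s, x) * ψ (s - sg, y)) * ∑ ξ : ZMod N × ZMod N,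
            P ξ (-x + rotPow sg y + xg) := by
        rw [Finset.sum_comm]
        refine congrArg _ (Finset.sum_congr rfl fun x _ => ?_)
        rw [Finset.sum_comm]
        refine Finset.sum_congr rfl fun y _ => ?_
        rw [Finset.mul_sum]
    _ = ((N : ℂ)^2)⁻¹ * ∑ x : ZMod N × ZMod N, ∑ y : ZMod N × ZMod N,
          (if y = rotPow (-sg) (x - xg) then
            (f (s, x) * ψ (s - sg, y)) * (N : ℂ)^2 else 0) := by
        refine congrArg _ (Finset.sum_congr rfl fun x _ =>
          Finset.sum_congr rfl fun y _ => ?_)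
        rw [sum_P]
        by_cases h : y = rotPow (-sg) (x - xg)
        · rw [if_pos ((hcond x y).mpr h), if_pos h]
        · rw [if_neg (fun hc => h ((hcond x y).mp hc)), if_neg h, mul_zero]
    _ = ∑ x : ZMod N × ZMod N, f (s, x) * ψ (s - sg, rotPow (-sg) (x - xg)) := by
        simp only [Finset.sum_ite_eq', Finset.mem_univ, if_true]
        rw [Finset.mul_sum]
        refine Finset.sum_congr rfl fun x _ => ?_
        field_simp

end P4Aux

/-- Frequency-domain computation of the `p4` group convolution (eq. 5): for
`g = (s_g, x_g)`,
`(f ⋆ ψ) (g) = ∑_s 𝓕⁻¹ ((𝓕 f_s) · (ξ ↦ (𝓕 ψ_{s − s_g}) (−ρ^{−s_g} ξ))) (x_g)`,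
where `f_s = f (s, ·)` and `ψ_s = ψ (s, ·)`. -/
theorem p4Conv_eq_freq_domain (N : ℕ) [NeZero N] (hN : 1 ≤ N)
    (f ψ : ZMod 4 × (ZMod N × ZMod N) → ℂ)
    (sg : ZMod 4) (xg : ZMod N × ZMod N) :
    p4Conv f ψ (sg, xg) =
      ∑ s : ZMod 4,
        idft2 N
          (fun ξ => dft2 N (fun x => f (s, x)) ξ *
            dft2 N (fun x => ψ (s - sg, x)) (-(rotPow (-sg) ξ))) xg := by

  simp_rw [P4Aux.key]
  rw [p4Conv, Fintype.sum_prod_type]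
  refine Finset.sum_congr rfl fun t _ => Finset.sum_congr rfl fun y _ => ?_
  have harg : p4Mul (p4Inv (sg, xg)) (t, y) = (t - sg, rotPow (-sg) (y - xg)) := by
    simp only [p4Mul, p4Inv, P4Aux.rotPow_sub, Prod.mk.injEq]
    exact ⟨by ring, by ring⟩
  rw [harg]
end

section
/- (Equivariance of the frequency-domain p4 Fourier layer) Let N ≥ 1, let ψ : ZMod 4 × (ZMod N)² → ℂ be a fixed kernel, and define the operator Φ on functions f : ZMod 4 × (ZMod N)² → ℂ by Φ(f)(s_g, x_g) := ∑_{s ∈ ZMod 4} 𝓕⁻¹( (𝓕 f(s,·)) · (ξ ↦ (𝓕 ψ(s − s_g, ·))(−ρ^{−s_g} ξ)) )(x_g). Then Φ is p4-equivariant: for every u ∈ p4 and every f, Φ(L_u f) = L_u(Φ f), where (L_u f)(h) := f(u⁻¹ · h). -/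
/-- The frequency-domain `p4` Fourier layer with kernel `ψ`:
`Φ (f) (s_g, x_g) = ∑_s 𝓕⁻¹ ((𝓕 f (s, ·)) · (ξ ↦ (𝓕 ψ (s − s_g, ·)) (−ρ^{−s_g} ξ))) (x_g)`. -/
noncomputable def gFourierLayer (N : ℕ) [NeZero N]
    (ψ f : ZMod 4 × (ZMod N × ZMod N) → ℂ) :
    ZMod 4 × (ZMod N × ZMod N) → ℂ :=
  fun g =>
    ∑ s : ZMod 4,
      idft2 N
        (fun ξ => dft2 N (fun x => f (s, x)) ξ *
          dft2 N (fun x => ψ (s - g.1, x)) (-(rotPow (-g.1) ξ))) g.2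

/-!
The layer is the `p4` group convolution `p4Conv f ψ` in disguise. For a fixed rotation index,
`ξ ↦ 𝓕 G (-ρᵏ ξ)` is the transform of `w ↦ G (-ρᵏ w)`, because `ρ` preserves the pairing
`ξ₁x₁ + ξ₂x₂`, so the convolution theorem on `(ZMod N)²` turns each summand of the layer into a
spatial sum, and the resulting double sum is `∑ₕ f h · ψ (g⁻¹ · h)`. A group convolution commutes
with left translations: substitute `h ↦ u⁻¹ · h`.
-/

open Finset

namespace P4Layer

variable {N : ℕ}

section Rotation

def rot : AddMonoid.End (ZMod N × ZMod N) where
  toFun := rot2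
  map_zero' := by simp [rot2]
  map_add' a b := by simp [rot2, add_comm]

lemma rotPow_eq_rot_pow (s : ZMod 4) : (rotPow s : ZMod N × ZMod N → ZMod N × ZMod N) =
    ⇑(rot ^ s.val) :=
  rfl

lemma rot_pow_four : (rot : AddMonoid.End (ZMod N × ZMod N)) ^ 4 = 1 := by
  ext x : 1
  show rot2 (rot2 (rot2 (rot2 x))) = x
  simp [rot2]

lemma rotPow_add (s t : ZMod 4) (x : ZMod N × ZMod N) :
    rotPow (s + t) x = rotPow s (rotPow t x) := by
  rw [rotPow_eq_rot_pow, rotPow_eq_rot_pow, rotPow_eq_rot_pow, ZMod.val_add,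
    ← pow_eq_pow_mod _ rot_pow_four, pow_add]
  rfl

lemma rotPow_zero (x : ZMod N × ZMod N) : rotPow 0 x = x := rfl

lemma rotPow_neg_rotPow (s : ZMod 4) (x : ZMod N × ZMod N) : rotPow (-s) (rotPow s x) = x := by
  rw [← rotPow_add, neg_add_cancel, rotPow_zero]

lemma rotPow_rotPow_neg (s : ZMod 4) (x : ZMod N × ZMod N) : rotPow s (rotPow (-s) x) = x := by
  rw [← rotPow_add, add_neg_cancel, rotPow_zero]

lemma rotPow_bijective (s : ZMod 4) : Function.Bijective (rotPow s : ZMod N × ZMod N → _) :=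
  Function.bijective_iff_has_inverse.2
    ⟨rotPow (-s), rotPow_neg_rotPow s, rotPow_rotPow_neg s⟩

lemma rotPow_map_add (s : ZMod 4) (a b : ZMod N × ZMod N) :
    rotPow s (a + b) = rotPow s a + rotPow s b :=
  map_add (rot ^ s.val) a b

lemma rotPow_map_sub (s : ZMod 4) (a b : ZMod N × ZMod N) :
    rotPow s (a - b) = rotPow s a - rotPow s b :=
  map_sub (rot ^ s.val) a b

lemma rotPow_map_neg (s : ZMod 4) (a : ZMod N × ZMod N) : rotPow s (-a) = -rotPow s a :=
  map_neg (rot ^ s.val) a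

end Rotation

section Fourier

def dot (ξ x : ZMod N × ZMod N) : ZMod N := ξ.1 * x.1 + ξ.2 * x.2

lemma dot_neg_left (ξ x : ZMod N × ZMod N) : dot (-ξ) x = -dot ξ x := by
  simp only [dot, Prod.fst_neg, Prod.snd_neg]; ring

lemma dot_neg_right (ξ x : ZMod N × ZMod N) : dot ξ (-x) = -dot ξ x := by
  simp only [dot, Prod.fst_neg, Prod.snd_neg]; ring

lemma dot_sub_right (ξ x y : ZMod N × ZMod N) : dot ξ (x - y) = dot ξ x - dot ξ y := by
  simp only [dot, Prod.fst_sub, Prod.snd_sub]; ring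

lemma dot_rot2 (ξ x : ZMod N × ZMod N) : dot (rot2 ξ) (rot2 x) = dot ξ x := by
  simp only [dot, rot2]; ring

lemma dot_rotPow (s : ZMod 4) (ξ x : ZMod N × ZMod N) :
    dot (rotPow s ξ) (rotPow s x) = dot ξ x := by
  simp only [rotPow]
  induction s.val with
  | zero => rfl
  | succ n ih => rw [Function.iterate_succ_apply', Function.iterate_succ_apply', dot_rot2, ih]

variable [NeZero N]

open Complex in
lemma stdAddChar_dot (ξ x : ZMod N × ZMod N) :
    ZMod.stdAddChar (dot ξ x) =
      exp (2 * Real.pi * I * (((ξ.1 * x.1).val : ℂ) + ((ξ.2 * x.2).val : ℂ)) / N) := by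
  rw [dot, AddChar.map_add_eq_mul, ZMod.stdAddChar_apply, ZMod.stdAddChar_apply,
    ZMod.toCircle_apply, ZMod.toCircle_apply, ← exp_add]
  ring_nf

open Complex in
lemma stdAddChar_neg_dot (ξ x : ZMod N × ZMod N) :
    ZMod.stdAddChar (-dot ξ x) =
      exp (-(2 * Real.pi * I) * (((ξ.1 * x.1).val : ℂ) + ((ξ.2 * x.2).val : ℂ)) / N) := by
  rw [AddChar.map_neg_eq_inv, stdAddChar_dot, ← exp_neg]
  ring_nf

lemma dft2_eq_sum (f : ZMod N × ZMod N → ℂ) (ξ : ZMod N × ZMod N) :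
    dft2 N f ξ = ∑ x, f x * ZMod.stdAddChar (-dot ξ x) := by
  simp only [dft2, stdAddChar_neg_dot]

lemma idft2_eq_sum (F : ZMod N × ZMod N → ℂ) (x : ZMod N × ZMod N) :
    idft2 N F x = ((N : ℂ) ^ 2)⁻¹ * ∑ ξ, F ξ * ZMod.stdAddChar (dot ξ x) := by
  simp only [idft2, stdAddChar_dot]

lemma sum_stdAddChar_dot (w : ZMod N × ZMod N) :
    ∑ ξ, (ZMod.stdAddChar (dot ξ w) : ℂ) = if w = 0 then (N : ℂ) ^ 2 else 0 := by
  have hprim := ZMod.isPrimitive_stdAddChar N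
  simp only [dot, AddChar.map_add_eq_mul, Fintype.sum_prod_type, ← Finset.sum_mul_sum,
    AddChar.sum_mulShift _ hprim, ZMod.card]
  by_cases h1 : w.1 = 0 <;> by_cases h2 : w.2 = 0 <;> simp [h1, h2, Prod.ext_iff, sq]

lemma dft2_comp_neg (G : ZMod N × ZMod N → ℂ) (ξ : ZMod N × ZMod N) :
    dft2 N (fun w => G (-w)) ξ = dft2 N G (-ξ) := by
  simp only [dft2_eq_sum]
  refine Fintype.sum_equiv (Equiv.neg _) _ _ fun x => ?_
  rw [Equiv.neg_apply, dot_neg_left, dot_neg_right, neg_neg]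

lemma dft2_comp_rotPow (G : ZMod N × ZMod N → ℂ) (s : ZMod 4) (ξ : ZMod N × ZMod N) :
    dft2 N (fun w => G (rotPow s w)) ξ = dft2 N G (rotPow s ξ) := by
  simp only [dft2_eq_sum]
  refine Fintype.sum_bijective _ (rotPow_bijective s) _ _ fun x => ?_
  rw [dot_rotPow]

lemma idft2_dft2_mul_dft2 (F H : ZMod N × ZMod N → ℂ) (x : ZMod N × ZMod N) :
    idft2 N (fun ξ => dft2 N F ξ * dft2 N H ξ) x = ∑ y, F y * H (x - y) := by
  have hN : ((N : ℂ) ^ 2) ≠ 0 := pow_ne_zero 2 (Nat.cast_ne_zero.2 (NeZero.ne N))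
  have expand : ∀ ξ, dft2 N F ξ * dft2 N H ξ * ZMod.stdAddChar (dot ξ x) =
      ∑ y, ∑ z, F y * H z * ZMod.stdAddChar (dot ξ (x - y - z)) := by
    intro ξ
    rw [dft2_eq_sum, dft2_eq_sum, sum_mul_sum, sum_mul]
    refine sum_congr rfl fun y _ => ?_
    rw [sum_mul]
    refine sum_congr rfl fun z _ => ?_
    rw [dot_sub_right, dot_sub_right, sub_eq_add_neg, sub_eq_add_neg, AddChar.map_add_eq_mul,
      AddChar.map_add_eq_mul]
    ring
  calc idft2 N (fun ξ => dft2 N F ξ * dft2 N H ξ) x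
      = ((N : ℂ) ^ 2)⁻¹ * ∑ ξ, ∑ y, ∑ z, F y * H z * ZMod.stdAddChar (dot ξ (x - y - z)) := by
        simp only [idft2_eq_sum, expand]
    _ = ((N : ℂ) ^ 2)⁻¹ * ∑ y, ∑ z, F y * H z * ∑ ξ, ZMod.stdAddChar (dot ξ (x - y - z)) := by
        congr 1
        rw [sum_comm]
        refine sum_congr rfl fun y _ => ?_
        rw [sum_comm]
        exact sum_congr rfl fun z _ => (mul_sum _ _ _).symm
    _ = ((N : ℂ) ^ 2)⁻¹ * ∑ y, F y * H (x - y) * (N : ℂ) ^ 2 := by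
        simp [sum_stdAddChar_dot, sub_eq_zero]
    _ = ∑ y, F y * H (x - y) := by
        rw [← sum_mul, mul_comm _ ((N : ℂ) ^ 2), inv_mul_cancel_left₀ hN]

lemma idft2_dft2_mul_dft2_neg_rotPow (F G : ZMod N × ZMod N → ℂ) (s : ZMod 4)
    (x : ZMod N × ZMod N) :
    idft2 N (fun ξ => dft2 N F ξ * dft2 N G (-rotPow s ξ)) x =
      ∑ y, F y * G (rotPow s (y - x)) := by
  have hG : ∀ ξ, dft2 N G (-rotPow s ξ) = dft2 N (fun w => G (-rotPow s w)) ξ := fun ξ => by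
    rw [← dft2_comp_neg, ← dft2_comp_rotPow (fun w => G (-w))]
  simp only [hG, idft2_dft2_mul_dft2]
  refine sum_congr rfl fun y _ => ?_
  rw [← rotPow_map_neg, neg_sub]

lemma gFourierLayer_eq_p4Conv (ψ f : ZMod 4 × (ZMod N × ZMod N) → ℂ)
    (g : ZMod 4 × (ZMod N × ZMod N)) : gFourierLayer N ψ f g = p4Conv f ψ g := by
  rw [gFourierLayer, p4Conv, Fintype.sum_prod_type]
  refine sum_congr rfl fun s _ => ?_
  rw [idft2_dft2_mul_dft2_neg_rotPow]
  refine sum_congr rfl fun y _ => ?_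
  rw [p4Mul, p4Inv, rotPow_map_sub, neg_add_eq_sub, neg_add_eq_sub]

end Fourier

section Group

-- A synonym, so that `*` is not the componentwise product of the ring `ZMod 4 × (ZMod N)²`.
def P4 (N : ℕ) : Type := ZMod 4 × (ZMod N × ZMod N)

instance : Mul (P4 N) := ⟨p4Mul⟩
instance : Inv (P4 N) := ⟨p4Inv⟩
instance : One (P4 N) := ⟨((0 : ZMod 4), (0 : ZMod N × ZMod N))⟩

lemma p4_mul_assoc (a b c : P4 N) : a * b * c = a * (b * c) := by
  show p4Mul (p4Mul a b) c = p4Mul a (p4Mul b c)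
  simp only [p4Mul, rotPow_map_add, rotPow_add, add_assoc]

lemma p4_one_mul (a : P4 N) : 1 * a = a :=
  Prod.ext (zero_add a.1) (zero_add a.2)

lemma p4_inv_mul_cancel (a : P4 N) : a⁻¹ * a = 1 := by
  show p4Mul (p4Inv a) a = ((0 : ZMod 4), (0 : ZMod N × ZMod N))
  simp [p4Mul, p4Inv]

instance : Group (P4 N) := Group.ofLeftAxioms p4_mul_assoc p4_one_mul p4_inv_mul_cancel

instance [NeZero N] : Fintype (P4 N) := inferInstanceAs (Fintype (ZMod 4 × (ZMod N × ZMod N)))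

lemma p4Conv_p4L [NeZero N] (f ψ : P4 N → ℂ) (u g : P4 N) :
    p4Conv (p4L u f) ψ g = p4Conv f ψ (u⁻¹ * g) := by
  show ∑ h : P4 N, f (u⁻¹ * h) * ψ (g⁻¹ * h) = ∑ h : P4 N, f h * ψ ((u⁻¹ * g)⁻¹ * h)
  refine Eq.trans ?_ (Equiv.sum_comp (Equiv.mulLeft u⁻¹) fun h => f h * ψ ((u⁻¹ * g)⁻¹ * h))
  simp [mul_assoc]

end Group

end P4Layer

open P4Layer in
theorem gFourierLayer_equivariant_general (N : ℕ) [NeZero N]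
    (ψ : ZMod 4 × (ZMod N × ZMod N) → ℂ)
    (u : ZMod 4 × (ZMod N × ZMod N))
    (f : ZMod 4 × (ZMod N × ZMod N) → ℂ) :
    gFourierLayer N ψ (p4L u f) = p4L u (gFourierLayer N ψ f) := by
  funext g
  rw [gFourierLayer_eq_p4Conv]
  exact (p4Conv_p4L f ψ u g).trans (gFourierLayer_eq_p4Conv ψ f _).symm

/-- Equivariance of the frequency-domain `p4` Fourier layer:
`Φ (L_u f) = L_u (Φ f)`. -/
theorem gFourierLayer_equivariant (N : ℕ) [NeZero N] (hN : 1 ≤ N)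
    (ψ : ZMod 4 × (ZMod N × ZMod N) → ℂ)
    (u : ZMod 4 × (ZMod N × ZMod N))
    (f : ZMod 4 × (ZMod N × ZMod N) → ℂ) :
    gFourierLayer N ψ (p4L u f) = p4L u (gFourierLayer N ψ f) :=
  gFourierLayer_equivariant_general N ψ u f
end
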